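/- Fix an integer d ≥ 2. For every k ≥ 0, F̃_k − G̃_k is a homogeneous polynomial of degree d^k in ℤ[b][x,y], and writing F̃_k − G̃_k = Σ_{j=0}^{d^k} e_{k,j}·x^j·y^{d^k−j} with e_{k,j} ∈ ℤ[b], both e_{k,0} and e_{k,d^k} are equal to b^{(d^k−1)/(d−1)} or −b^{(d^k−1)/(d−1)}. -/

import Mathlib

/-! The extreme coefficients of a homogeneous polynomial are its values at `(1, 0)` and `(0, 1)`.
At `(1, 0)` the factor `y` kills `F̃_n`, and `G̃_n = b·G̃_{n-1}^d`. At `(0, 1)` the factor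
`G̃_0 = x` kills `H_n` for `n ≥ 1`, so again `G̃_{n+1} = b·G̃_n^d`, starting from `G̃_1 = -b`.
Either way the exponent of `b` follows `e_{n+1} = d·e_n + 1`, whence `e_n = 1 + d + ⋯ + d^{n-1}`. -/

open MvPolynomial

/-- The polynomial ring `ℤ[b][x,y]`: two variables `0 ↦ x`, `1 ↦ y` over `ℤ[b]`. -/
abbrev Rb : Type := MvPolynomial (Fin 2) (Polynomial ℤ)

/-- The parameter `b` viewed as a constant of `ℤ[b][x,y]`. -/
noncomputable def bb : Rb := C Polynomial.X

/-- The pair `(F̃_n/y, G̃_n)` in `ℤ[b][x,y]`: writing `F̃_n = y·H_n` (as `y ∣ F̃_n`),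
the recurrence `F̃_0 = y`, `G̃_0 = x`, `F̃_n = F̃_{n−1}·G̃_{n−1}^{d−1}`,
`G̃_n = (x − b·y)·F̃_{n−1}^d/y + b·G̃_{n−1}^d` becomes `H_0 = 1`,
`H_n = H_{n−1}·G̃_{n−1}^{d−1}`, `G̃_n = (x − b·y)·y^{d−1}·H_{n−1}^d + b·G̃_{n−1}^d`. -/
noncomputable def HG (d : ℕ) : ℕ → Rb × Rb
  | 0 => (1, X 0)
  | n + 1 => ((HG d n).1 * (HG d n).2 ^ (d - 1),
      (X 0 - bb * X 1) * X 1 ^ (d - 1) * (HG d n).1 ^ d + bb * (HG d n).2 ^ d)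

/-- `F̃_n = y·H_n`. -/
noncomputable def Ft (d n : ℕ) : Rb := X 1 * (HG d n).1

theorem MvPolynomial.IsHomogeneous.coeff_single_eq_eval {σ R : Type*} [CommSemiring R]
    [DecidableEq σ] {φ : MvPolynomial σ R} {m : ℕ} (hφ : φ.IsHomogeneous m) (i : σ) :
    coeff (Finsupp.single i m) φ = eval (Pi.single i 1) φ := by
  rw [eval_eq, Finset.sum_eq_single (Finsupp.single i m)]
  · rw [Finset.prod_eq_one, mul_one]
    intro j hj
    rw [Finset.mem_singleton.mp (Finsupp.support_single_subset hj), Pi.single_eq_same, one_pow]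
  · intro s hs hne
    by_cases hsi : s.support ⊆ {i}
    · refine absurd ?_ hne
      have hdeg : s.degree = m := by
        by_contra h
        exact Finsupp.mem_support_iff.mp hs (hφ.coeff_eq_zero h)
      rw [Finsupp.support_subset_singleton.mp hsi, Finsupp.degree_single] at hdeg
      rw [Finsupp.support_subset_singleton.mp hsi, hdeg]
    · obtain ⟨j, hj, hji⟩ := Finset.not_subset.mp hsi
      rw [Finset.prod_eq_zero hj, mul_zero]
      rw [Pi.single_eq_of_ne (by simpa using hji), zero_pow (Finsupp.mem_support_iff.mp hj)]
  · intro h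
    rw [notMem_support_iff.mp h, zero_mul]

theorem pow_geom_sum_succ {M : Type*} [Monoid M] (a : M) (d n : ℕ) :
    a ^ (∑ i ∈ Finset.range (n + 1), d ^ i) = a * (a ^ ∑ i ∈ Finset.range n, d ^ i) ^ d := by
  rw [geom_sum_succ, pow_succ', ← pow_mul, mul_comm d]

theorem neg_one_pow_mul_eq_or {R : Type*} [Ring R] (s : ℕ) (a : R) :
    (-1) ^ s * a = a ∨ (-1) ^ s * a = -a := by
  rcases neg_one_pow_eq_or R s with h | h <;> simp [h]

namespace HG

variable {d : ℕ}

theorem fst_succ (n : ℕ) : (HG d (n + 1)).1 = (HG d n).1 * (HG d n).2 ^ (d - 1) := rfl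

theorem snd_succ (n : ℕ) : (HG d (n + 1)).2 =
    (X 0 - bb * X 1) * X 1 ^ (d - 1) * (HG d n).1 ^ d + bb * (HG d n).2 ^ d := rfl

theorem isHomogeneous (hd : 1 ≤ d) (n : ℕ) :
    (HG d n).1.IsHomogeneous (d ^ n - 1) ∧ (HG d n).2.IsHomogeneous (d ^ n) := by
  induction n with
  | zero => exact ⟨isHomogeneous_one _ _, isHomogeneous_X _ 0⟩
  | succ n ih =>
    obtain ⟨hH, hG⟩ := ih
    have hdn : 1 ≤ d ^ n := Nat.one_le_pow _ _ hd
    have hdn' : 1 ≤ d ^ (n + 1) := Nat.one_le_pow _ _ hd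
    have hlin : (X 0 - bb * X 1 : Rb).IsHomogeneous 1 :=
      (isHomogeneous_X _ 0).sub ((isHomogeneous_X _ 1).C_mul _)
    constructor
    · have h := hH.mul (hG.pow (d - 1))
      rwa [show d ^ n - 1 + d ^ n * (d - 1) = d ^ (n + 1) - 1 by
        zify [hd, hdn, hdn']; ring] at h
    · have h := (hlin.mul ((isHomogeneous_X _ 1).pow (d - 1))).mul (hH.pow d)
      rw [show 1 + 1 * (d - 1) + (d ^ n - 1) * d = d ^ (n + 1) by
        zify [hd, hdn]; ring] at h
      exact h.add ((hG.pow d).C_mul _)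

theorem eval_single_zero_snd (hd : 2 ≤ d) (n : ℕ) :
    eval (Pi.single 0 1) (HG d n).2 = Polynomial.X ^ (∑ i ∈ Finset.range n, d ^ i) := by
  induction n with
  | zero => simp [HG]
  | succ n ih =>
    rw [snd_succ]
    simp [bb, ih, pow_geom_sum_succ, zero_pow (show d - 1 ≠ 0 by omega)]

theorem eval_single_one_succ (hd : 2 ≤ d) (n : ℕ) :
    eval (Pi.single 1 1) (HG d (n + 1)).1 = 0 ∧
      ∃ s : ℕ, eval (Pi.single 1 1) (HG d (n + 1)).2 =
        (-1) ^ s * Polynomial.X ^ (∑ i ∈ Finset.range (n + 1), d ^ i) := by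
  induction n with
  | zero =>
    refine ⟨?_, 1, ?_⟩ <;>
      simp [HG, bb, zero_pow (show d - 1 ≠ 0 by omega), zero_pow (show d ≠ 0 by omega)]
  | succ n ih =>
    obtain ⟨hH, s, hG⟩ := ih
    refine ⟨?_, s * d, ?_⟩
    · rw [fst_succ, map_mul, hH, zero_mul]
    · rw [snd_succ]
      simp [bb, hH, hG, pow_geom_sum_succ, zero_pow (show d ≠ 0 by omega)]
      ring

end HG

theorem isHomogeneous_Ft {d : ℕ} (hd : 1 ≤ d) (n : ℕ) : (Ft d n).IsHomogeneous (d ^ n) := by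
  have h := (isHomogeneous_X (Polynomial ℤ) (1 : Fin 2)).mul (HG.isHomogeneous hd n).1
  rwa [Nat.add_sub_cancel' (Nat.one_le_pow _ _ hd)] at h

theorem eval_single_zero_Ft (d n : ℕ) : eval (Pi.single 0 1) (Ft d n) = 0 := by
  simp [Ft]

theorem eval_single_one_Ft_sub_snd {d : ℕ} (hd : 2 ≤ d) (n : ℕ) :
    ∃ s : ℕ, eval (Pi.single 1 1) (Ft d n - (HG d n).2) =
      (-1) ^ s * Polynomial.X ^ (∑ i ∈ Finset.range n, d ^ i) := by
  cases n with
  | zero => exact ⟨0, by simp [Ft, HG]⟩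
  | succ n =>
    obtain ⟨hH, s, hG⟩ := HG.eval_single_one_succ hd n
    exact ⟨s + 1, by simp [Ft, hH, hG, pow_succ]⟩

/-- For `d ≥ 2` and every `k ≥ 0`, `F̃_k − G̃_k` is homogeneous of
degree `d^k` in `x, y`, and writing `F̃_k − G̃_k = Σ_j e_{k,j}·x^j·y^{d^k−j}` with
`e_{k,j} ∈ ℤ[b]`, both `e_{k,0}` and `e_{k,d^k}` equal `±b^{(d^k−1)/(d−1)}`,
where `(d^k−1)/(d−1) = 1 + d + ⋯ + d^{k−1}`. -/
theorem extreme_coeffs_Ft_sub_Gt (d : ℕ) (hd : 2 ≤ d) (k : ℕ) :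
    (Ft d k - (HG d k).2).IsHomogeneous (d ^ k) ∧
    (coeff (Finsupp.single 1 (d ^ k)) (Ft d k - (HG d k).2) =
        Polynomial.X ^ (∑ i ∈ Finset.range k, d ^ i) ∨
      coeff (Finsupp.single 1 (d ^ k)) (Ft d k - (HG d k).2) =
        -Polynomial.X ^ (∑ i ∈ Finset.range k, d ^ i)) ∧
    (coeff (Finsupp.single 0 (d ^ k)) (Ft d k - (HG d k).2) =
        Polynomial.X ^ (∑ i ∈ Finset.range k, d ^ i) ∨
      coeff (Finsupp.single 0 (d ^ k)) (Ft d k - (HG d k).2) =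
        -Polynomial.X ^ (∑ i ∈ Finset.range k, d ^ i)) := by
  have hhom : (Ft d k - (HG d k).2).IsHomogeneous (d ^ k) :=
    (isHomogeneous_Ft (by omega) k).sub (HG.isHomogeneous (by omega) k).2
  refine ⟨hhom, ?_, Or.inr ?_⟩
  · obtain ⟨s, hs⟩ := eval_single_one_Ft_sub_snd hd k
    rw [hhom.coeff_single_eq_eval, hs]
    exact neg_one_pow_mul_eq_or s _
  · rw [hhom.coeff_single_eq_eval, map_sub, eval_single_zero_Ft, HG.eval_single_zero_snd hd,
      zero_sub]
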